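/- arXiv:1407.7663 — 3 statements merged into one kernel-verified Lean document; each statement's English description precedes it below -/
import Mathlib

section
/- For any constant δ > 0 and any ε := ε_1 p_0 ∈ (0,1], set γ_0 := ε/(4(1+δ)). Then k-tournament selection with k ≥ 4(1+δ)/ε satisfies: for every population P of size λ sorted by fitness and every γ ∈ (0, γ_0], the probability β(γ,P) that the selected individual is at least as fit as the individual of rank ⌈γλ⌉ satisfies β(γ,P) ≥ 1 − 1/(γk + 1) ≥ γ √((1+δ)/(ε γ_0)); in particular condition (C4) holds with this γ_0. -/
/-!
The tournament winner is at least as fit as the individual of rank `⌈γλ⌉` unless all `k`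
samples fall among the individuals strictly worse than it; there are at most `(1 - γ)λ` of
those, so this happens with probability at most `(1 - γ)^k ≤ 1/(γk + 1)`, by Bernoulli's
inequality `1 + γk ≤ (1 + γ)^k` and `(1 - γ)^k (1 + γ)^k = (1 - γ²)^k ≤ 1`.
For `γ₀ = ε/(4(1+δ))` the square root equals `2(1+δ)/ε`, so `a := 2γ(1+δ)/ε ≤ 1/2` and
`γk ≥ 2a`, whence `1/(γk + 1) ≤ 1/(2a + 1) ≤ 1 - a`.
-/

open scoped ENNReal

/-- The product distribution on `Fin n → X`: each coordinate sampled
independently from `p i`. -/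
noncomputable def pmfPi {n : ℕ} {X : Type*} [Fintype X] (p : Fin n → PMF X) :
    PMF (Fin n → X) :=
  PMF.ofFintype (fun f => ∏ i, p i (f i)) (by
    rw [← Fintype.prod_sum]
    exact Finset.prod_eq_one (fun i _ => by
      rw [← tsum_fintype (L := SummationFilter.unconditional _)]; exact (p i).tsum_coe))

/-- The `r`-th largest value (rank `r`, `1`-indexed) of the multiset of values
`g 0, …, g (lam-1)`. -/
noncomputable def rankVal {lam : ℕ} (g : Fin lam → ℝ) (r : ℕ) : ℝ :=
  ((List.ofFn g).insertionSort (· ≥ ·)).getD (r - 1) 0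

/-- `k`-tournament selection: `k` individuals are sampled uniformly at random
with replacement from the population `P` and (an index of) the fittest of
these is returned. -/
noncomputable def tournamentSel {X : Type*} {lam : ℕ} [NeZero lam] (k : ℕ)
    (f : X → ℝ) (P : Fin lam → X) : PMF (Fin lam) :=
  (pmfPi fun _ : Fin k => PMF.uniformOfFintype (Fin lam)).map fun s =>
    ((List.ofFn s).argmax fun i => f (P i)).getD default

/-- Selective pressure `β(γ, P)` of a selection mechanism: the probability of
selecting an individual at least as fit as the individual of rank `⌈γλ⌉`. -/
noncomputable def selPressure {X : Type*} {lam : ℕ} (f : X → ℝ)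
    (psel : (Fin lam → X) → PMF (Fin lam)) (P : Fin lam → X) (γ : ℝ) : ℝ≥0∞ :=
  (psel P).toOuterMeasure {i | rankVal (fun i => f (P i)) ⌈γ * lam⌉₊ ≤ f (P i)}

open Finset

theorem List.le_apply_argmax_getD {α β : Type*} [LinearOrder β] {f : α → β} {l : List α}
    {a : α} (d : α) (ha : a ∈ l) : f a ≤ f ((l.argmax f).getD d) := by
  obtain ⟨m, hm⟩ := Option.ne_none_iff_exists'.mp
    (List.argmax_eq_none (f := f).not.mpr (List.ne_nil_of_mem ha))
  rw [hm, Option.getD_some]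
  exact List.le_of_mem_argmax ha hm

theorem PMF.one_sub_toOuterMeasure_compl_le {α : Type*} (p : PMF α) (s : Set α) :
    1 - p.toOuterMeasure sᶜ ≤ p.toOuterMeasure s := by
  rw [tsub_le_iff_right, ← (p.toOuterMeasure_apply_eq_one_iff Set.univ).mpr (Set.subset_univ _),
    ← Set.union_compl_self s]
  exact MeasureTheory.measure_union_le s sᶜ

theorem pmfPi_toOuterMeasure_pi {n : ℕ} {X : Type*} [Fintype X] (p : Fin n → PMF X)
    (s : Fin n → Set X) :
    (pmfPi p).toOuterMeasure (Set.univ.pi s) = ∏ i, (p i).toOuterMeasure (s i) := by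
  classical
  simp only [PMF.toOuterMeasure_apply_fintype, Fintype.prod_sum, pmfPi]
  refine Fintype.sum_congr _ _ fun x => ?_
  simp only [Set.indicator_apply, Set.mem_univ_pi, PMF.ofFintype_apply]
  split_ifs with h
  · exact (Finset.prod_congr rfl fun i _ => if_pos (h i)).symm
  · obtain ⟨i, hi⟩ := not_forall.mp h
    exact (Finset.prod_eq_zero (Finset.mem_univ i) (if_neg hi)).symm

theorem le_card_filter_rankVal_le {lam : ℕ} (g : Fin lam → ℝ) {r : ℕ} (hr : r ≤ lam) :
    r ≤ #{i | rankVal g r ≤ g i} := by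
  rcases Nat.eq_zero_or_pos r with rfl | hr0
  · exact Nat.zero_le _
  set L := (List.ofFn g).insertionSort (· ≥ ·)
  have hlen : L.length = lam := by simp [L]
  have hsorted : L.Pairwise (· ≥ ·) := List.pairwise_insertionSort _ _
  have hrL : r - 1 < L.length := by omega
  have hrank : rankVal g r = L[r - 1] := List.getD_eq_getElem _ _ hrL
  have htake : ∀ x ∈ L.take r, rankVal g r ≤ x := by
    intro x hx
    obtain ⟨i, hi, rfl⟩ := List.mem_iff_getElem.mp hx
    rw [List.length_take] at hi
    rw [hrank, List.getElem_take]
    rcases (show i ≤ r - 1 by omega).eq_or_lt with rfl | hlt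
    · exact le_rfl
    · exact List.pairwise_iff_getElem.mp hsorted _ _ _ _ hlt
  calc r = (L.take r).countP (fun x => rankVal g r ≤ x) := by
        rw [List.countP_eq_length.mpr (by simpa using htake), List.length_take]; omega
    _ ≤ L.countP (fun x => rankVal g r ≤ x) := (List.take_sublist r L).countP_le
    _ = (List.ofFn g).countP (fun x => rankVal g r ≤ x) :=
        (List.perm_insertionSort _ _).countP_eq _
    _ = #{i | rankVal g r ≤ g i} := by
        rw [List.ofFn_eq_map, List.countP_map, Fin.univ_def]
        simp only [List.countP_eq_length_filter, card, filter, Multiset.filter_coe,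
          Multiset.coe_card]
        rfl

theorem one_sub_pow_le_tournamentSel_toOuterMeasure {X : Type*} {lam : ℕ} [NeZero lam]
    (k : ℕ) (f : X → ℝ) (P : Fin lam → X) (v : ℝ) :
    1 - ((#{i | f (P i) < v} : ℝ≥0∞) / lam) ^ k
      ≤ (tournamentSel k f P).toOuterMeasure {i | v ≤ f (P i)} := by
  classical
  set winner : (Fin k → Fin lam) → Fin lam :=
    fun s => ((List.ofFn s).argmax fun i => f (P i)).getD default
  have hlosers :
      (winner ⁻¹' {i | v ≤ f (P i)})ᶜ ⊆ Set.univ.pi fun _ => {i | f (P i) < v} := by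
    intro s hs j _
    by_contra hj
    exact hs ((not_lt.mp hj).trans
      (List.le_apply_argmax_getD (f := fun i => f (P i)) default (List.mem_ofFn.mpr ⟨j, rfl⟩)))
  calc 1 - ((#{i | f (P i) < v} : ℝ≥0∞) / lam) ^ k
      = 1 - (pmfPi fun _ : Fin k => PMF.uniformOfFintype (Fin lam)).toOuterMeasure
          (Set.univ.pi fun _ => {i | f (P i) < v}) := by
        rw [pmfPi_toOuterMeasure_pi, Finset.prod_const, Finset.card_univ, Fintype.card_fin,
          PMF.toOuterMeasure_uniformOfFintype_apply, Fintype.card_fin, Fintype.card_subtype]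
        simp only [Set.mem_ofPred_eq]
    _ ≤ 1 - (pmfPi fun _ : Fin k => PMF.uniformOfFintype (Fin lam)).toOuterMeasure
          (winner ⁻¹' {i | v ≤ f (P i)})ᶜ := by
        gcongr
    _ ≤ (tournamentSel k f P).toOuterMeasure {i | v ≤ f (P i)} := by
        rw [tournamentSel, PMF.toOuterMeasure_map_apply]
        exact PMF.one_sub_toOuterMeasure_compl_le _ _

theorem ofReal_one_sub_pow_le_selPressure_tournamentSel {X : Type*} {lam : ℕ} [NeZero lam]
    (k : ℕ) (f : X → ℝ) (P : Fin lam → X) {γ : ℝ} (hγ : γ ≤ 1) :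
    ENNReal.ofReal (1 - (1 - γ) ^ k) ≤ selPressure f (tournamentSel k f) P γ := by
  set r := ⌈γ * lam⌉₊
  set v := rankVal (fun i => f (P i)) r
  have hlam : (0 : ℝ) < lam := by exact_mod_cast Nat.pos_of_ne_zero (NeZero.ne lam)
  have hr : r ≤ lam := Nat.ceil_le.mpr (by nlinarith)
  have hcount : #{i | f (P i) < v} + r ≤ lam := by
    have hge : r ≤ #{i | v ≤ f (P i)} := le_card_filter_rankVal_le _ hr
    have hsplit := Finset.card_filter_add_card_filter_not (s := univ) fun i => v ≤ f (P i)
    simp only [not_le, Finset.card_univ, Fintype.card_fin] at hsplit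
    omega
  have hfrac : ((#{i | f (P i) < v} : ℝ≥0∞) / lam) ≤ ENNReal.ofReal (1 - γ) := by
    rw [← ENNReal.ofReal_natCast, ← ENNReal.ofReal_natCast lam,
      ← ENNReal.ofReal_div_of_pos hlam]
    refine ENNReal.ofReal_le_ofReal ((div_le_iff₀ hlam).mpr ?_)
    have : (#{i | f (P i) < v} : ℝ) + r ≤ lam := by exact_mod_cast hcount
    nlinarith [Nat.le_ceil (γ * lam)]
  calc ENNReal.ofReal (1 - (1 - γ) ^ k)
      = 1 - ENNReal.ofReal (1 - γ) ^ k := by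
        rw [ENNReal.ofReal_sub _ (pow_nonneg (by linarith) k), ENNReal.ofReal_one,
          ENNReal.ofReal_pow (by linarith)]
    _ ≤ 1 - ((#{i | f (P i) < v} : ℝ≥0∞) / lam) ^ k := by gcongr
    _ ≤ selPressure f (tournamentSel k f) P γ :=
        one_sub_pow_le_tournamentSel_toOuterMeasure k f P v

theorem one_sub_pow_le_one_div_mul_add_one {γ : ℝ} (h0 : 0 ≤ γ) (h1 : γ ≤ 1) (k : ℕ) :
    (1 - γ) ^ k ≤ 1 / (γ * k + 1) := by
  rw [le_div_iff₀ (by positivity)]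
  calc (1 - γ) ^ k * (γ * k + 1) ≤ (1 - γ) ^ k * (1 + γ) ^ k := by
        gcongr
        linarith [one_add_mul_le_pow (show -2 ≤ γ by linarith) k]
    _ = (1 - γ ^ 2) ^ k := by rw [← mul_pow]; ring
    _ ≤ 1 := pow_le_one₀ (by nlinarith) (by nlinarith)

theorem le_one_sub_one_div_add_one {a t : ℝ} (ha₀ : 0 ≤ a) (ha : a ≤ 1 / 2)
    (hat : 2 * a ≤ t) : a ≤ 1 - 1 / (t + 1) := by
  have ht : 0 < t + 1 := by linarith
  have : 1 / (t + 1) ≤ 1 - a := by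
    rw [div_le_iff₀ ht]
    nlinarith
  linarith

theorem tournament_selection_satisfies_C4_general
    {X : Type*} {lam : ℕ} [NeZero lam] (k : ℕ)
    (f : X → ℝ) (δ ε γ0 : ℝ)
    (hδ : 0 < δ) (hε0 : 0 < ε) (hεle : ε ≤ 1)
    (hγ0 : γ0 = ε / (4 * (1 + δ)))
    (hk : 4 * (1 + δ) / ε ≤ (k : ℝ)) :
    ∀ (P : Fin lam → X) (γ : ℝ), 0 < γ → γ ≤ γ0 →
      ENNReal.ofReal (1 - 1 / (γ * k + 1)) ≤ selPressure f (tournamentSel k f) P γ ∧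
      γ * Real.sqrt ((1 + δ) / (ε * γ0)) ≤ 1 - 1 / (γ * k + 1) := by
  intro P γ hγ hγγ0
  subst hγ0
  have hγ1 : γ ≤ 1 := hγγ0.trans <| (div_le_one (by positivity)).mpr (by linarith)
  have hsqrt : √((1 + δ) / (ε * (ε / (4 * (1 + δ))))) = 2 * (1 + δ) / ε := by
    rw [← Real.sqrt_sq (by positivity : 0 ≤ 2 * (1 + δ) / ε)]
    congr 1
    field_simp
    ring
  refine ⟨(ENNReal.ofReal_le_ofReal ?_).trans
    (ofReal_one_sub_pow_le_selPressure_tournamentSel k f P hγ1), ?_⟩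
  · linarith [one_sub_pow_le_one_div_mul_add_one hγ.le hγ1 k]
  · rw [hsqrt]
    refine le_one_sub_one_div_add_one (by positivity) ?_ ?_
    · rw [le_div_iff₀ (by positivity)] at hγγ0
      rw [mul_div_assoc', div_le_iff₀ hε0]
      linarith
    · calc 2 * (γ * (2 * (1 + δ) / ε)) = γ * (4 * (1 + δ) / ε) := by ring
        _ ≤ γ * k := by gcongr

/-- **Lemma 1(1)**: for any constant `δ > 0` and `ε := ε₁p₀ ∈ (0,1]`, with
`γ₀ := ε/(4(1+δ))`, `k`-tournament selection with `k ≥ 4(1+δ)/ε` satisfies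
`β(γ,P) ≥ 1 − 1/(γk + 1) ≥ γ √((1+δ)/(ε γ₀))` for all populations `P` and all
`γ ∈ (0, γ₀]`; in particular condition (C4) holds with this `γ₀`. -/
theorem tournament_selection_satisfies_C4
    {X : Type*} {lam : ℕ} [NeZero lam] (k : ℕ)
    (f : X → ℝ) (δ ε1 p0 ε γ0 : ℝ)
    (hδ : 0 < δ) (hε : ε = ε1 * p0) (hε0 : 0 < ε) (hεle : ε ≤ 1)
    (hγ0 : γ0 = ε / (4 * (1 + δ)))
    (hk : 4 * (1 + δ) / ε ≤ (k : ℝ)) :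
    ∀ (P : Fin lam → X) (γ : ℝ), 0 < γ → γ ≤ γ0 →
      ENNReal.ofReal (1 - 1 / (γ * k + 1)) ≤ selPressure f (tournamentSel k f) P γ ∧
      γ * Real.sqrt ((1 + δ) / (ε * γ0)) ≤ 1 - 1 / (γ * k + 1) :=
  tournament_selection_satisfies_C4_general k f δ ε γ0 hδ hε0 hεle hγ0 hk
end

section
/- For any constant δ > 0 and any ε := ε_1 p_0 ∈ (0,1], exponential ranking selection with parameter η ≥ 4(1+δ)/ε satisfies: setting γ_0 := ε/(4(1+δ)), for every γ ∈ (0, γ_0], the probability β(γ) of selecting an individual among the ⌈γλ⌉ fittest satisfies β(γ) ≥ ∫_0^γ η e^{η(1−x)}/(e^η − 1) dx = (e^η/(e^η − 1))(1 − e^{−ηγ}) ≥ 1 − 1/(1 + ηγ) ≥ γ √((1+δ)/(ε γ_0)); in particular condition (C4) holds with this γ_0. -/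
/-!
Since `α ≥ 0` and `⌈γλ⌉/λ ≥ γ`, the selection probability dominates `∫₀^γ α`, which is computed
with the antiderivative `-e^{η(1-x)}/(e^η - 1)`. The factor `e^η/(e^η - 1)` is at least `1` and
`e^{-t} ≤ 1/(1+t)`. Finally `γ₀ = ε/(4(1+δ))` turns the target `γ √((1+δ)/(εγ₀))` into
`γ/(2γ₀)`, while `η ≥ 1/γ₀` gives `1 - 1/(1+ηγ) ≥ γ/(γ+γ₀) ≥ γ/(2γ₀)` for `γ ≤ γ₀`.
-/

open Real

lemma integral_mul_exp_mul_one_sub (η c : ℝ) :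
    ∫ x in (0:ℝ)..c, η * exp (η * (1 - x)) = exp η * (1 - exp (-η * c)) := by
  have hderiv : ∀ x ∈ Set.uIcc (0:ℝ) c,
      HasDerivAt (fun y => -exp (η * (1 - y))) (η * exp (η * (1 - x))) x := by
    intro x _
    have hinner : HasDerivAt (fun y : ℝ => η * (1 - y)) (-η) x := by
      simpa using ((hasDerivAt_id x).const_sub 1).const_mul η
    exact ((hasDerivAt_exp _).comp x hinner).neg.congr_deriv (by ring)
  rw [intervalIntegral.integral_eq_sub_of_hasDerivAt hderiv
    (Continuous.intervalIntegrable (by fun_prop) _ _),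
    show η * (1 - c) = η + -η * c by ring, exp_add]
  simp only [sub_zero, mul_one]
  ring

lemma integral_exp_ranking (η c : ℝ) :
    ∫ x in (0:ℝ)..c, η * exp (η * (1 - x)) / (exp η - 1) =
      exp η / (exp η - 1) * (1 - exp (-η * c)) := by
  rw [intervalIntegral.integral_div, integral_mul_exp_mul_one_sub]
  ring

lemma exp_ranking_nonneg {η : ℝ} (hη : 0 ≤ η) (x : ℝ) :
    0 ≤ η * exp (η * (1 - x)) / (exp η - 1) := by
  have : 0 ≤ exp η - 1 := by linarith [one_le_exp hη]
  positivity

lemma integral_exp_ranking_mono {η a b : ℝ} (hη : 0 ≤ η) (ha : 0 ≤ a) (hab : a ≤ b) :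
    ∫ x in (0:ℝ)..a, η * exp (η * (1 - x)) / (exp η - 1) ≤
      ∫ x in (0:ℝ)..b, η * exp (η * (1 - x)) / (exp η - 1) :=
  intervalIntegral.integral_mono_interval le_rfl ha hab
    (Filter.Eventually.of_forall (exp_ranking_nonneg hη))
    (Continuous.intervalIntegrable (by fun_prop) _ _)

lemma le_natCeil_mul_div {γ : ℝ} {lam : ℕ} (hlam : 0 < lam) : γ ≤ (⌈γ * lam⌉₊ : ℝ) / lam := by
  rw [le_div_iff₀ (by exact_mod_cast hlam)]
  exact Nat.le_ceil _

lemma exp_neg_le_inv_one_add {t : ℝ} (ht : 0 ≤ t) : exp (-t) ≤ 1 / (1 + t) := by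
  rw [exp_neg, one_div]
  exact inv_anti₀ (by linarith) (by linarith [add_one_le_exp t])

lemma one_le_exp_div_exp_sub_one {η : ℝ} (hη : 0 < η) : 1 ≤ exp η / (exp η - 1) := by
  rw [le_div_iff₀ (by linarith [add_one_lt_exp hη.ne'])]
  linarith

lemma one_sub_inv_one_add_le_exp_ranking {η γ : ℝ} (hη : 0 < η) (hγ : 0 ≤ γ) :
    1 - 1 / (1 + η * γ) ≤ exp η / (exp η - 1) * (1 - exp (-η * γ)) := by
  have hηγ : 0 ≤ η * γ := by positivity
  have hexp : exp (-η * γ) ≤ 1 / (1 + η * γ) := by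
    simpa [neg_mul] using exp_neg_le_inv_one_add hηγ
  have hle_one : exp (-η * γ) ≤ 1 := exp_le_one_iff.2 (by nlinarith)
  calc 1 - 1 / (1 + η * γ) ≤ 1 * (1 - exp (-η * γ)) := by linarith
    _ ≤ exp η / (exp η - 1) * (1 - exp (-η * γ)) :=
      mul_le_mul_of_nonneg_right (one_le_exp_div_exp_sub_one hη) (by linarith)

lemma sqrt_div_mul_eq_inv_two_mul {δ ε γ0 : ℝ} (hγ0 : γ0 = ε / (4 * (1 + δ))) (hγ0pos : 0 < γ0) :
    sqrt ((1 + δ) / (ε * γ0)) = 1 / (2 * γ0) := by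
  have hε : ε ≠ 0 := by rintro rfl; simp [hγ0] at hγ0pos
  have hδ : 1 + δ ≠ 0 := by intro h; simp [hγ0, h] at hγ0pos
  rw [show (1 + δ) / (ε * γ0) = (1 / (2 * γ0)) ^ 2 by rw [hγ0]; field_simp; ring,
    sqrt_sq (by positivity)]

lemma div_two_mul_le_one_sub_inv_one_add {γ γ0 η : ℝ} (hγ : 0 < γ) (hγγ0 : γ ≤ γ0)
    (hη : 1 / γ0 ≤ η) : γ / (2 * γ0) ≤ 1 - 1 / (1 + η * γ) := by
  have hγ0 : 0 < γ0 := hγ.trans_le hγγ0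
  have hηγ : γ / γ0 ≤ η * γ := by
    rw [div_eq_mul_one_div, mul_comm]; exact mul_le_mul_of_nonneg_right hη hγ.le
  calc γ / (2 * γ0) ≤ γ / (γ + γ0) := div_le_div_of_nonneg_left hγ.le (by positivity) (by linarith)
    _ = 1 - 1 / (1 + γ / γ0) := by field_simp; ring
    _ ≤ 1 - 1 / (1 + η * γ) := by gcongr

theorem exp_ranking_selection_satisfies_C4_general
    (lam : ℕ) (hlam : 0 < lam)
    (δ ε γ0 η : ℝ)
    (hγ0 : γ0 = ε / (4 * (1 + δ)))
    (hη : 4 * (1 + δ) / ε ≤ η) :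
    ∀ γ : ℝ, 0 < γ → γ ≤ γ0 →
      (∫ x in (0:ℝ)..γ, η * Real.exp (η * (1 - x)) / (Real.exp η - 1)) ≤
        (∫ x in (0:ℝ)..((⌈γ * lam⌉₊ : ℝ) / lam),
          η * Real.exp (η * (1 - x)) / (Real.exp η - 1)) ∧
      (∫ x in (0:ℝ)..γ, η * Real.exp (η * (1 - x)) / (Real.exp η - 1)) =
        Real.exp η / (Real.exp η - 1) * (1 - Real.exp (-η * γ)) ∧
      1 - 1 / (1 + η * γ) ≤
        Real.exp η / (Real.exp η - 1) * (1 - Real.exp (-η * γ)) ∧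
      γ * Real.sqrt ((1 + δ) / (ε * γ0)) ≤ 1 - 1 / (1 + η * γ) := by
  intro γ hγ hγγ0
  have hγ0pos : 0 < γ0 := hγ.trans_le hγγ0
  have hη' : 1 / γ0 ≤ η := by rwa [hγ0, one_div_div]
  have hηpos : 0 < η := (one_div_pos.2 hγ0pos).trans_le hη'
  refine ⟨integral_exp_ranking_mono hηpos.le hγ.le (le_natCeil_mul_div hlam),
    integral_exp_ranking η γ, one_sub_inv_one_add_le_exp_ranking hηpos hγ.le, ?_⟩
  rw [sqrt_div_mul_eq_inv_two_mul hγ0 hγ0pos, mul_one_div]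
  exact div_two_mul_le_one_sub_inv_one_add hγ hγγ0 hη'

/-- **Lemma 1(3)**: exponential ranking selection with ranking function
`α(x) = η e^{η(1−x)}/(e^η − 1)` and parameter `η ≥ 4(1+δ)/ε`, where `δ > 0` and
`ε := ε₁p₀ ∈ (0,1]`, satisfies with `γ₀ := ε/(4(1+δ))`: for every `γ ∈ (0, γ₀]`,
the probability `β(γ) = ∫_0^{⌈γλ⌉/λ} α(x) dx` of selecting an individual among
the `⌈γλ⌉` fittest satisfies
`β(γ) ≥ ∫_0^γ α(x) dx = (e^η/(e^η−1))(1 − e^{−ηγ}) ≥ 1 − 1/(1+ηγ)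
  ≥ γ √((1+δ)/(ε γ₀))`;
in particular condition (C4) holds with this `γ₀`. -/
theorem exp_ranking_selection_satisfies_C4
    (lam : ℕ) (hlam : 0 < lam)
    (δ ε1 p0 ε γ0 η : ℝ)
    (hδ : 0 < δ) (hε : ε = ε1 * p0) (hε0 : 0 < ε) (hεle : ε ≤ 1)
    (hγ0 : γ0 = ε / (4 * (1 + δ)))
    (hη : 4 * (1 + δ) / ε ≤ η) :
    ∀ γ : ℝ, 0 < γ → γ ≤ γ0 →
      (∫ x in (0:ℝ)..γ, η * Real.exp (η * (1 - x)) / (Real.exp η - 1)) ≤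
        (∫ x in (0:ℝ)..((⌈γ * lam⌉₊ : ℝ) / lam),
          η * Real.exp (η * (1 - x)) / (Real.exp η - 1)) ∧
      (∫ x in (0:ℝ)..γ, η * Real.exp (η * (1 - x)) / (Real.exp η - 1)) =
        Real.exp η / (Real.exp η - 1) * (1 - Real.exp (-η * γ)) ∧
      1 - 1 / (1 + η * γ) ≤
        Real.exp η / (Real.exp η - 1) * (1 - Real.exp (-η * γ)) ∧
      γ * Real.sqrt ((1 + δ) / (ε * γ0)) ≤ 1 - 1 / (1 + η * γ) :=
  exp_ranking_selection_satisfies_C4_general lam hlam δ ε γ0 η hγ0 hη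
end

section
/- Let π be a permutation of [n] with INV(π) = j < m, where m := n(n−1)/2, and let σ be obtained from π by the Exchange mutation operator which draws N from a Poisson distribution with parameter 1 and applies N transpositions of uniformly random pairs of distinct indices. Then Pr(INV(σ) > j) ≥ (m − j)/(e·m), and moreover Pr(INV(σ) ≥ j) ≥ Pr(N = 0) = 1/e. -/
open scoped ENNReal

/-- `INV(π)`: the number of correctly ordered pairs of the permutation `π`,
i.e. pairs `(i, j)` with `i < j` and `π(i) < π(j)`. -/
def INV {n : ℕ} (π : Equiv.Perm (Fin n)) : ℕ :=
  (Finset.univ.filter fun p : Fin n × Fin n => p.1 < p.2 ∧ π p.1 < π p.2).card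

/-- A uniformly random transposition: a pair of distinct indices is selected
uniformly at random and the corresponding entries are exchanged (for `n < 2`,
where no such pair exists, this is the identity). -/
noncomputable def randTrans (n : ℕ) : PMF (Equiv.Perm (Fin n)) :=
  if h : 2 ≤ n then
    haveI : Nonempty {p : Fin n × Fin n // p.1 ≠ p.2} :=
      ⟨⟨(⟨0, by omega⟩, ⟨1, by omega⟩), by simp [Fin.ext_iff]⟩⟩
    (PMF.uniformOfFintype {p : Fin n × Fin n // p.1 ≠ p.2}).map
      fun p => Equiv.swap p.1.1 p.1.2
  else PMF.pure 1

/-- Consecutively apply `N` uniformly random pairwise exchanges to `π`. -/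
noncomputable def exchangeN {n : ℕ} : ℕ → Equiv.Perm (Fin n) → PMF (Equiv.Perm (Fin n))
  | 0, π => PMF.pure π
  | N + 1, π => (randTrans n).bind fun τ => exchangeN N (π * τ)

/-- The `Exchange` mutation operator: draw `N ∼ Poisson(1)` and consecutively
apply `N` exchanges, each between a uniformly selected pair of distinct
indices. -/
noncomputable def exchangeMut {n : ℕ} (π : Equiv.Perm (Fin n)) :
    PMF (Equiv.Perm (Fin n)) :=
  (ProbabilityTheory.poissonPMF 1).bind fun N => exchangeN N π

/-! A single exchange of an inverted pair `(a, b)` (positions `a < b` with `π b < π a`)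
strictly increases `INV`: every correctly ordered pair of `π` can be matched with a correctly
ordered pair of `π * swap a b` other than `(a, b)`. There are `m - j` inverted pairs, and a uniform
transposition is one of them with probability `(m - j) / m`. The exchange operator performs
exactly one transposition with probability `Pr(N = 1) = 1/e` and none with probability
`Pr(N = 0) = 1/e`. -/

open Finset Equiv

lemma apply_swap_lt_apply_swap_of_swap_lt_swap {α β : Type*} [LinearOrder α] [LinearOrder β]
    (f : α → β) {a b i k : α} (hab : a < b) (hba : f b < f a) (hik : i < k)
    (hf : f i < f k) (hs : swap a b k < swap a b i) :
    f (swap a b i) < f (swap a b k) := by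
  simp only [swap_apply_def] at hs ⊢
  split_ifs at hs ⊢ <;> grind

lemma PMF.mul_toOuterMeasure_le_toOuterMeasure_bind {α β : Type*} (p : PMF α) (f : α → PMF β)
    (s : Set β) (a : α) : p a * (f a).toOuterMeasure s ≤ (p.bind f).toOuterMeasure s := by
  rw [PMF.toOuterMeasure_bind_apply]
  exact ENNReal.le_tsum a

lemma card_subtype_fst_ne_snd (α : Type*) [Fintype α] [DecidableEq α] :
    Fintype.card {p : α × α // p.1 ≠ p.2} = 2 * (Fintype.card α).choose 2 := by
  have hoff : #{p : α × α | p.1 ≠ p.2} = #(univ : Finset α).offDiag := by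
    congr 1; ext; simp
  rw [Fintype.card_subtype, hoff, offDiag_card, card_univ, ← Nat.mul_sub_one,
    Nat.choose_two_right, Nat.mul_div_cancel' (Nat.even_mul_pred_self _).two_dvd]

lemma poissonPMF_one_apply (k : ℕ) :
    ProbabilityTheory.poissonPMF 1 k = ENNReal.ofReal (1 / (Real.exp 1 * k.factorial)) := by
  rw [← ProbabilityTheory.poissonPMFReal_ofReal_eq_poissonPMF, ProbabilityTheory.poissonPMFReal]
  simp [Real.exp_neg, div_eq_inv_mul]

section Permutations

variable {n : ℕ}

def correctPairs (π : Perm (Fin n)) : Finset (Fin n × Fin n) :=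
  {p | p.1 < p.2 ∧ π p.1 < π p.2}

def inversions (π : Perm (Fin n)) : Finset (Fin n × Fin n) :=
  {p | p.1 < p.2 ∧ π p.2 < π p.1}

lemma INV_eq_card_correctPairs (π : Perm (Fin n)) : INV π = #(correctPairs π) := rfl

lemma mem_correctPairs {π : Perm (Fin n)} {p : Fin n × Fin n} :
    p ∈ correctPairs π ↔ p.1 < p.2 ∧ π p.1 < π p.2 := by
  simp [correctPairs]

lemma card_inversions_add_INV (π : Perm (Fin n)) : #(inversions π) + INV π = n.choose 2 := by
  have hpairs := Fintype.card_product_filter_lt (α := Fin n)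
  rw [Fintype.card_fin] at hpairs
  rw [← hpairs, add_comm,
    ← card_filter_add_card_filter_not (s := {x : Fin n × Fin n | x.1 < x.2})
      (fun p : Fin n × Fin n => π p.1 < π p.2)]
  simp only [filter_filter, INV_eq_card_correctPairs, correctPairs, inversions]
  congr 2
  ext p
  simp only [mem_filter, mem_univ, true_and]
  exact and_congr_right fun h => (not_lt.trans (π.injective.ne h.ne).symm.le_iff_lt).symm

theorem INV_lt_INV_mul_swap (π : Perm (Fin n)) {a b : Fin n} (hab : a < b) (hba : π b < π a) :
    INV π < INV (π * swap a b) := by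
  set s := swap a b
  -- `(s p.1, s p.2)` carries under `π * s` the values that `p` carries under `π`; when `s`
  -- reverses the positions of `p`, the pair `p` itself stays correctly ordered.
  let f : Fin n × Fin n → Fin n × Fin n := fun p => if s p.1 < s p.2 then (s p.1, s p.2) else p
  have hmaps : ∀ p ∈ correctPairs π, f p ∈ (correctPairs (π * s)).erase (a, b) := by
    intro p hp
    rw [mem_correctPairs] at hp
    rw [mem_erase, mem_correctPairs]
    by_cases hsp : s p.1 < s p.2
    · simp only [f, if_pos hsp, Perm.mul_apply, swap_apply_self, s]
      refine ⟨fun h => ?_, hsp, hp.2⟩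
      simp only [Prod.ext_iff, swap_apply_eq_iff, swap_apply_left, swap_apply_right] at h
      exact absurd hp.1 (h.1 ▸ h.2 ▸ hab.not_gt)
    · simp only [f, if_neg hsp, Perm.mul_apply]
      refine ⟨?_, hp.1, apply_swap_lt_apply_swap_of_swap_lt_swap π hab hba hp.1 hp.2 ?_⟩
      · rintro rfl
        exact hp.2.not_gt hba
      · exact (not_lt.mp hsp).lt_of_ne (s.injective.ne hp.1.ne')
  have hinj : Set.InjOn f (correctPairs π) := by
    intro p hp q hq hpq
    rw [mem_coe, mem_correctPairs] at hp hq
    simp only [f] at hpq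
    -- In the mixed cases `q = (s p.1, s p.2)`, so `s` would both keep and reverse its order.
    split_ifs at hpq with hsp hsq hsq
    · simpa [Prod.ext_iff] using hpq
    · grind
    · grind
    · exact hpq
  have hab_mem : (a, b) ∈ correctPairs (π * s) := by
    simpa [mem_correctPairs, s, hab] using hba
  calc INV π ≤ #((correctPairs (π * s)).erase (a, b)) := card_le_card_of_injOn f hmaps hinj
    _ < INV (π * s) := card_erase_lt_of_mem hab_mem

lemma card_div_le_randTrans_toOuterMeasure (hn : 2 ≤ n) (T : Finset (Fin n × Fin n))
    (s : Set (Perm (Fin n))) (hT : ∀ p ∈ T, p.1 < p.2 ∧ swap p.1 p.2 ∈ s) :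
    (#T : ℝ≥0∞) / n.choose 2 ≤ (randTrans n).toOuterMeasure s := by
  classical
  rw [randTrans, dif_pos hn, PMF.toOuterMeasure_map_apply]
  -- Both orientations `(i, k)` and `(k, i)` of a pair of `T` draw the transposition `swap i k`.
  let U := (T ∪ T.image Prod.swap).subtype fun p : Fin n × Fin n => p.1 ≠ p.2
  have hU : ∀ x ∈ U, swap x.1.1 x.1.2 ∈ s := by
    intro x hx
    simp only [U, mem_subtype, mem_union, mem_image] at hx
    obtain hx | ⟨p, hp, hpx⟩ := hx
    · exact (hT _ hx).2
    · rw [← hpx, Prod.fst_swap, Prod.snd_swap, swap_comm]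
      exact (hT p hp).2
  have hdisj : Disjoint T (T.image Prod.swap) := by
    simp only [disjoint_left, mem_image, not_exists, not_and]
    rintro p hp q hq rfl
    exact (hT _ hp).1.not_gt (hT q hq).1
  have hcardU : #U = 2 * #T := by
    rw [card_subtype, filter_true_of_mem, card_union_of_disjoint hdisj,
      card_image_of_injective _ Prod.swap_injective, two_mul]
    simp only [mem_union, mem_image]
    rintro _ (hp | ⟨p, hp, rfl⟩)
    exacts [(hT _ hp).1.ne, (hT p hp).1.ne']
  refine le_of_eq_of_le ?_ (MeasureTheory.measure_mono hU)
  simp only [PMF.toOuterMeasure_uniformOfFintype_apply, Finset.coe_sort_coe, Fintype.card_coe,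
    hcardU, card_subtype_fst_ne_snd, Fintype.card_fin]
  push_cast
  exact (ENNReal.mul_div_mul_left _ _ two_ne_zero ENNReal.ofNat_ne_top).symm

lemma exchangeN_one (π : Perm (Fin n)) : exchangeN 1 π = (randTrans n).map (π * ·) :=
  PMF.bind_pure_comp _ _

lemma card_inversions_div_le_exchangeN_one (hn : 2 ≤ n) (π : Perm (Fin n)) :
    (#(inversions π) : ℝ≥0∞) / n.choose 2 ≤
      (exchangeN 1 π).toOuterMeasure {σ | INV π < INV σ} := by
  rw [exchangeN_one, PMF.toOuterMeasure_map_apply]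
  refine card_div_le_randTrans_toOuterMeasure hn _ _ fun p hp => ?_
  simp only [inversions, mem_filter, mem_univ, true_and] at hp
  exact ⟨hp.1, INV_lt_INV_mul_swap π hp.1 hp.2⟩

lemma poissonPMF_one_one_mul_card_inversions_div (π : Perm (Fin n)) (h : INV π < n.choose 2) :
    ProbabilityTheory.poissonPMF 1 1 * (#(inversions π) / n.choose 2) =
      ENNReal.ofReal ((n.choose 2 - INV π) / (Real.exp 1 * n.choose 2)) := by
  have hc : (0 : ℝ) < n.choose 2 := by exact_mod_cast (Nat.zero_le _).trans_lt h
  have hk : (#(inversions π) : ℝ) = n.choose 2 - INV π := by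
    rw [← card_inversions_add_INV π]; push_cast; ring
  rw [poissonPMF_one_apply, Nat.factorial_one, Nat.cast_one, mul_one,
    ← ENNReal.ofReal_natCast #(inversions π), ← ENNReal.ofReal_natCast (n.choose 2),
    ← ENNReal.ofReal_div_of_pos hc, ← ENNReal.ofReal_mul (by positivity), hk]
  congr 1
  field_simp

end Permutations

/-- If `INV(π) = j < m := n(n−1)/2` and `σ` is obtained from `π` by the
`Exchange` mutation operator, then `Pr(INV(σ) > j) ≥ (m − j)/(e·m)`, and
moreover `Pr(INV(σ) ≥ j) ≥ Pr(N = 0) = 1/e`. -/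
theorem exchange_mutation_inv_improvement
    (n j m : ℕ) (hm : m = n * (n - 1) / 2)
    (π : Equiv.Perm (Fin n)) (hπ : INV π = j) (hj : j < m) :
    ENNReal.ofReal (((m : ℝ) - j) / (Real.exp 1 * m)) ≤
      (exchangeMut π).toOuterMeasure {σ | j < INV σ} ∧
    (ProbabilityTheory.poissonPMF 1) 0 ≤
      (exchangeMut π).toOuterMeasure {σ | j ≤ INV σ} ∧
    (ProbabilityTheory.poissonPMF 1) 0 = ENNReal.ofReal (1 / Real.exp 1) := by
  rw [← Nat.choose_two_right] at hm
  subst hm hπ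
  have hn : 2 ≤ n := by
    by_contra! h
    simp [Nat.choose_eq_zero_of_lt h] at hj
  refine ⟨?_, ?_, by simp [poissonPMF_one_apply]⟩ <;> rw [exchangeMut]
  · calc ENNReal.ofReal ((n.choose 2 - INV π) / (Real.exp 1 * n.choose 2))
        = ProbabilityTheory.poissonPMF 1 1 * (#(inversions π) / n.choose 2) :=
          (poissonPMF_one_one_mul_card_inversions_div π hj).symm
      _ ≤ ProbabilityTheory.poissonPMF 1 1 *
            (exchangeN 1 π).toOuterMeasure {σ | INV π < INV σ} := by
          gcongr; exact card_inversions_div_le_exchangeN_one hn π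
      _ ≤ _ := PMF.mul_toOuterMeasure_le_toOuterMeasure_bind _ _ _ _
  · refine le_of_eq_of_le ?_
      (PMF.mul_toOuterMeasure_le_toOuterMeasure_bind _ (exchangeN · π) _ 0)
    rw [exchangeN, PMF.toOuterMeasure_pure_apply, if_pos (Set.mem_setOf_eq ▸ le_rfl), mul_one]
end
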